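/- Let α ∈ (0,1) and μ₀ a probability measure on ℝ with finite first moment. With c(x,y) = (x−y)² and linear penalization φ(x) = x (so φ* = ∞·1_{(1,∞)}), the robust average value-at-risk inf_{λ ∈ [0,1]} OCE(l^{λc}) equals AV@R_α(μ₀) + 1/(4α), where l(x) = x⁺/α and l^{λc}(x) = (1/α)(x + 1/(4λα))⁺ for λ > 0. -/

import Mathlib

open MeasureTheory Set Filter Topology ENNReal

noncomputable section

def erealToENNReal (a : EReal) : ℝ≥0∞ := if a = ⊤ then ⊤ else ENNReal.ofReal a.toReal

/-- Extended integral of an `EReal`-valued function. -/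
def eint (μ : Measure ℝ) (h : ℝ → EReal) : EReal :=
  ((∫⁻ x, erealToENNReal (h x) ∂μ : ℝ≥0∞) : EReal)
    - ((∫⁻ x, erealToENNReal (-(h x)) ∂μ : ℝ≥0∞) : EReal)

/-- `λc`-transform with translation-invariant cost. -/
def lamTrans (ctil : ℝ → ℝ≥0∞) (lam : ℝ) (g : ℝ → EReal) (x : ℝ) : EReal :=
  ⨆ y : ℝ, (g y - (lam : EReal) * (ctil (y - x) : EReal))

/-- Optimized certainty equivalent of an `EReal`-valued loss. -/
def OCEe (μ : Measure ℝ) (h : ℝ → EReal) : EReal :=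
  ⨅ m : ℝ, (eint μ (fun x => h (x - m)) + (m : EReal))

/-!
For `λ > 0`, completing the square in `y/α - λ(y - x)²` (maximised at `y = x + 1/(2λα)`)
shows that the `λc`-transform of `l(x) = x⁺/α` is the shifted loss `x ↦ l(x + 1/(4λα))`.
The OCE is translation invariant, so `OCE(l^{λc}) = AV@R_α(μ₀) + 1/(4λα)`, which decreases
in `λ` and is smallest at `λ = 1`. At `λ = 0` the transform is `sup l = ∞`, so this value
does not compete.
-/

/-- Rockafellar–Uryasev formula for AV@R_α. -/
def avar (μ : Measure ℝ) (α : ℝ) : ℝ := ⨅ m : ℝ, ((1 / α) * ∫ x, max (x - m) 0 ∂μ + m)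

namespace EReal

lemma coe_ciInf {ι : Sort*} [Nonempty ι] {f : ι → ℝ} (hf : BddBelow (range f)) :
    ((⨅ i, f i : ℝ) : EReal) = ⨅ i, (f i : EReal) :=
  Monotone.map_ciInf_of_continuousAt continuous_coe_real_ereal.continuousAt
    (fun _ _ h => EReal.coe_le_coe_iff.2 h) hf

lemma iInf_add_coe {ι : Sort*} (f : ι → EReal) (t : ℝ) :
    ⨅ i, (f i + t) = (⨅ i, f i) + t := by
  refine le_antisymm ?_ (le_iInf fun i => add_le_add_left (iInf_le f i) _)
  have h : (⨅ i, (f i + t)) - t ≤ ⨅ i, f i :=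
    le_iInf fun i => EReal.sub_le_of_le_add (iInf_le (fun i => f i + t) i)
  calc ⨅ i, (f i + t) = (⨅ i, (f i + t)) - t + t := EReal.sub_add_cancel.symm
    _ ≤ (⨅ i, f i) + t := add_le_add_left h _

end EReal

lemma erealToENNReal_coe (r : ℝ) : erealToENNReal (r : EReal) = ENNReal.ofReal r := by
  simp [erealToENNReal]

lemma eint_coe {μ : Measure ℝ} {f : ℝ → ℝ} (hf : Integrable f μ) :
    eint μ (fun x => (f x : EReal)) = ((∫ x, f x ∂μ : ℝ) : EReal) := by
  have hneg : ∫⁻ x, ENNReal.ofReal (-f x) ∂μ ≠ ⊤ := hf.neg.lintegral_lt_top.ne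
  simp only [eint, ← EReal.coe_neg, erealToENNReal_coe]
  rw [← EReal.coe_ennreal_toReal hf.lintegral_lt_top.ne, ← EReal.coe_ennreal_toReal hneg,
    ← EReal.coe_sub, integral_eq_lintegral_pos_part_sub_lintegral_neg_part hf]

lemma eint_const_top (μ : Measure ℝ) [NeZero μ] : eint μ (fun _ => ⊤) = ⊤ := by
  simp [eint, erealToENNReal, ENNReal.top_mul, NeZero.ne μ]

lemma OCEe_const_top (μ : Measure ℝ) [NeZero μ] : OCEe μ (fun _ => ⊤) = ⊤ := by
  simp [OCEe, eint_const_top, EReal.top_add_of_ne_bot]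

lemma OCEe_comp_add_const (μ : Measure ℝ) (h : ℝ → EReal) (t : ℝ) :
    OCEe μ (fun x => h (x + t)) = OCEe μ h + t := by
  rw [OCEe, OCEe, ← EReal.iInf_add_coe, ← (Equiv.addRight t).iInf_comp]
  congr 1
  funext m
  simp only [Equiv.coe_addRight, EReal.coe_add, add_assoc]
  congr 3
  funext x
  ring_nf

lemma lamTrans_zero (c : ℝ → ℝ≥0∞) (g : ℝ → EReal) (x : ℝ) : lamTrans c 0 g x = ⨆ y, g y := by
  simp [lamTrans]

lemma lamTrans_coe {c : ℝ → ℝ} (hc : ∀ d, 0 ≤ c d) (lam : ℝ) (g : ℝ → ℝ) (x : ℝ) :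
    lamTrans (fun d => ENNReal.ofReal (c d)) lam (fun y => (g y : EReal)) x
      = ⨆ y, ((g y - lam * c (y - x) : ℝ) : EReal) := by
  simp only [lamTrans, EReal.coe_ennreal_ofReal, max_eq_left (hc _), EReal.coe_mul, EReal.coe_sub]

section PosPart

variable {α : ℝ}

lemma iSup_pos_part_div_eq_top (hα : 0 < α) : ⨆ y, ((max y 0 / α : ℝ) : EReal) = ⊤ := by
  refine (EReal.eq_top_iff_forall_lt _).2 fun r => lt_of_lt_of_le ?_ (le_iSup _ (α * (|r| + 1)))
  rw [EReal.coe_lt_coe_iff, max_eq_left (by positivity), mul_div_cancel_left₀ _ hα.ne']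
  linarith [le_abs_self r]

lemma isGreatest_range_pos_part_div_sub_sq (hα : 0 < α) {lam : ℝ} (hlam : 0 < lam) (x : ℝ) :
    IsGreatest (range fun y => max y 0 / α - lam * (y - x) ^ 2)
      (max (x + 1 / (4 * lam * α)) 0 / α) := by
  set t := 1 / (4 * lam * α) with ht
  have ht0 : 0 < t := by positivity
  have hsq : ∀ y, y / α - lam * (y - x) ^ 2 = (x + t) / α - lam * (y - (x + 2 * t)) ^ 2 := by
    intro y
    rw [ht]
    field_simp
    ring
  refine ⟨?_, ?_⟩
  · rcases le_or_gt (x + t) 0 with h | h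
    · refine ⟨x, ?_⟩
      simp [max_eq_right h, max_eq_right (by linarith : x ≤ 0)]
    · refine ⟨x + 2 * t, ?_⟩
      simp only [max_eq_left (by linarith : 0 ≤ x + 2 * t), max_eq_left h.le, hsq]
      simp
  · rintro _ ⟨y, rfl⟩
    rcases le_total y 0 with hy | hy
    · have hrhs : 0 ≤ max (x + t) 0 / α := by positivity
      simp only [max_eq_right hy, zero_div]
      nlinarith [sq_nonneg (y - x)]
    · simp only [max_eq_left hy, hsq]
      calc (x + t) / α - lam * (y - (x + 2 * t)) ^ 2 ≤ (x + t) / α := sub_le_self _ (by positivity)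
        _ ≤ max (x + t) 0 / α := div_le_div_of_nonneg_right (le_max_left _ _) hα.le

lemma lamTrans_sq_pos_part_div (hα : 0 < α) {lam : ℝ} (hlam : 0 < lam) (x : ℝ) :
    lamTrans (fun d => ENNReal.ofReal (d ^ 2)) lam (fun y => ((max y 0 / α : ℝ) : EReal)) x
      = ((max (x + 1 / (4 * lam * α)) 0 / α : ℝ) : EReal) := by
  obtain ⟨⟨y, hy⟩, hbound⟩ := isGreatest_range_pos_part_div_sub_sq hα hlam x
  rw [lamTrans_coe sq_nonneg]
  exact le_antisymm (iSup_le fun z => EReal.coe_le_coe_iff.2 (hbound ⟨z, rfl⟩))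
    (le_iSup_of_le y (EReal.coe_le_coe_iff.2 hy.ge))

lemma OCEe_lamTrans_zero_pos_part_div (hα : 0 < α) (c : ℝ → ℝ≥0∞) (μ : Measure ℝ) [NeZero μ] :
    OCEe μ (lamTrans c 0 (fun y => ((max y 0 / α : ℝ) : EReal))) = ⊤ := by
  have h : lamTrans c 0 (fun y => ((max y 0 / α : ℝ) : EReal)) = fun _ => ⊤ :=
    funext fun x => (lamTrans_zero _ _ x).trans (iSup_pos_part_div_eq_top hα)
  rw [h, OCEe_const_top]

variable {μ : Measure ℝ} [IsProbabilityMeasure μ]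

lemma OCEe_pos_part_div (hα0 : 0 < α) (hα1 : α ≤ 1) (hint : Integrable (fun x : ℝ => x) μ) :
    OCEe μ (fun x => ((max x 0 / α : ℝ) : EReal)) = (avar μ α : EReal) := by
  have hint_pos : ∀ m, Integrable (fun x => max (x - m) 0) μ :=
    fun m => (hint.sub (integrable_const m)).sup (integrable_const 0)
  have hbdd : BddBelow (range fun m => (1 / α) * ∫ x, max (x - m) 0 ∂μ + m) := by
    refine ⟨∫ x, x ∂μ, ?_⟩
    rintro _ ⟨m, rfl⟩
    have hmean : ∫ x, x ∂μ - m ≤ ∫ x, max (x - m) 0 ∂μ :=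
      calc ∫ x, x ∂μ - m = ∫ x, (x - m) ∂μ := by simp [integral_sub hint (integrable_const m)]
        _ ≤ _ := integral_mono (hint.sub (integrable_const m)) (hint_pos m) fun x => le_max_left _ _
    have hscale : ∫ x, max (x - m) 0 ∂μ ≤ (1 / α) * ∫ x, max (x - m) 0 ∂μ :=
      le_mul_of_one_le_left (integral_nonneg fun x => le_max_right _ _) (one_le_one_div hα0 hα1)
    simp only
    linarith
  rw [avar, EReal.coe_ciInf hbdd, OCEe]
  congr 1
  funext m
  rw [eint_coe ((hint_pos m).div_const α), integral_div, one_div_mul_eq_div, EReal.coe_add]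

lemma OCEe_lamTrans_sq_pos_part_div (hα0 : 0 < α) (hα1 : α ≤ 1)
    (hint : Integrable (fun x : ℝ => x) μ) {lam : ℝ} (hlam : 0 < lam) :
    OCEe μ (lamTrans (fun d => ENNReal.ofReal (d ^ 2)) lam (fun y => ((max y 0 / α : ℝ) : EReal)))
      = ((avar μ α + 1 / (4 * lam * α) : ℝ) : EReal) := by
  rw [funext (lamTrans_sq_pos_part_div hα0 hlam),
    OCEe_comp_add_const μ (fun x => ((max x 0 / α : ℝ) : EReal)),
    OCEe_pos_part_div hα0 hα1 hint, EReal.coe_add]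

end PosPart

/-- with `l(x) = x⁺/α`, cost `c(x,y) = (x−y)²` and linear penalization
`φ(x) = x` (so `φ* = ∞·1_{(1,∞)}`), the robust average value-at-risk
`inf_{λ ∈ [0,1]} OCE(l^{λc})` equals `AV@R_α(μ₀) + 1/(4α)`. -/
theorem robust_AVaR_wasserstein2_linear_penalty (α : ℝ) (hα : α ∈ Set.Ioo (0 : ℝ) 1)
    (μ₀ : Measure ℝ) [IsProbabilityMeasure μ₀] (hint : Integrable (fun x : ℝ => x) μ₀) :
    (⨅ (lam : ℝ) (_ : lam ∈ Set.Icc (0 : ℝ) 1),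
        OCEe μ₀ (lamTrans (fun d => ENNReal.ofReal (d ^ 2)) lam
          (fun x => ((max x 0 / α : ℝ) : EReal))))
      = (((⨅ m : ℝ, ((1 / α) * ∫ x, max (x - m) 0 ∂μ₀ + m)) + 1 / (4 * α) : ℝ) : EReal) := by
  obtain ⟨hα0, hα1⟩ := hα
  refine le_antisymm (iInf₂_le_of_le 1 ⟨zero_le_one, le_rfl⟩ ?_) (le_iInf₂ fun lam hlam => ?_)
  · rw [OCEe_lamTrans_sq_pos_part_div hα0 hα1.le hint one_pos, mul_one]
    rfl
  · rcases hlam.1.eq_or_lt with rfl | hlam0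
    · rw [OCEe_lamTrans_zero_pos_part_div hα0]
      exact le_top
    · rw [OCEe_lamTrans_sq_pos_part_div hα0 hα1.le hint hlam0, EReal.coe_le_coe_iff]
      have hweight : 1 / (4 * α) ≤ 1 / (4 * lam * α) :=
        one_div_le_one_div_of_le (by positivity) (by nlinarith [hlam.2])
      exact add_le_add_right hweight _

end
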